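/- For every integer n ≥ 0, f(−n, x, s) = (−1)^{n−1} · q^{binom(n+1,2)} · f(n, x, q^{−n}·s) / s^n. -/
import Mathlib


open Finset

variable {K : Type*} [Field K]

noncomputable def qFibPos (q x t : K) : ℕ → K
  | 0 => 0
  | 1 => 1
  | n + 2 => x * qFibPos q x t (n + 1) + q ^ n * t * qFibPos q x t n

noncomputable def qFibNeg (q x t : K) : ℕ → K
  | 0 => 0
  | 1 => q / t
  | m + 2 => (qFibNeg q x t m - x * qFibNeg q x t (m + 1)) * q ^ (m + 2) / t

/-- The Carlitz q-Fibonacci polynomial `f(n, x, t)` for `n : ℤ`, defined by `f 0 = 0`,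
`f 1 = 1` and `f n = x * f (n-1) + q^(n-2) * t * f (n-2)`, solved backwards for `n < 0`. -/
noncomputable def qFib (q x t : K) : ℤ → K
  | Int.ofNat n => qFibPos q x t n
  | Int.negSucc m => qFibNeg q x t (m + 1)

lemma qFibPos_rec (q x t : K) (n : ℕ) :
    qFibPos q x t (n + 2) = x * qFibPos q x t (n + 1) + q ^ n * t * qFibPos q x t n := by
  rw [qFibPos]

lemma qFibPos_dual (q x t : K) (n : ℕ) :
    qFibPos q x t (n + 2) =
      x * qFibPos q x (q * t) (n + 1) + q * t * qFibPos q x (q ^ 2 * t) n := by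
  induction n using Nat.twoStepInduction with
  | zero => simp [qFibPos]
  | one =>
    show qFibPos q x t 3 = _
    rw [qFibPos_rec q x t 1, qFibPos_rec q x (q*t) 0]
    simp [qFibPos]
  | more n ih1 ih2 =>
    rw [qFibPos_rec q x t (n + 2), ih2, ih1,
      qFibPos_rec q x (q * t) (n + 1), qFibPos_rec q x (q ^ 2 * t) n]
    ring

lemma choose_step (n : ℕ) : (n + 2).choose 2 = (n + 1).choose 2 + (n + 1) := by
  rw [show n + 2 = (n + 1) + 1 from rfl, Nat.choose_succ_succ, Nat.choose_one_right,
    Nat.add_comm]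

lemma qFibNeg_eq (q x s : K) (hq : q ≠ 0) (hs : s ≠ 0) (n : ℕ) :
    qFibNeg q x s (n + 1) =
      (-1 : K) ^ n * q ^ ((n + 2).choose 2) *
        qFibPos q x ((q ^ (n + 1))⁻¹ * s) (n + 1) / s ^ (n + 1) := by
  induction n using Nat.twoStepInduction with
  | zero => simp [qFibNeg, qFibPos]
  | one =>
    show qFibNeg q x s 2 = _
    rw [qFibNeg, qFibNeg, qFibNeg, qFibPos_rec q x _ 0]
    simp [qFibPos]
    field_simp
  | more n ih1 ih2 =>
    have h3 : qFibNeg q x s (n + 2 + 1) =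
        (qFibNeg q x s (n + 1) - x * qFibNeg q x s (n + 2)) * q ^ (n + 3) / s := by
      rw [show n + 2 + 1 = n + 1 + 2 from rfl, qFibNeg]
    have e1 : q * ((q ^ (n + 3))⁻¹ * s) = (q ^ (n + 2))⁻¹ * s := by
      field_simp; ring
    have e2 : q ^ 2 * ((q ^ (n + 3))⁻¹ * s) = (q ^ (n + 1))⁻¹ * s := by
      field_simp; ring
    rw [h3, ih1, ih2, show n + 2 + 1 = (n + 1) + 2 from rfl,
      qFibPos_dual q x ((q ^ (n + 3))⁻¹ * s) (n + 1), e1, e2,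
      choose_step (n + 2), choose_step (n + 1), pow_add, pow_add, pow_add]
    rw [div_eq_div_iff hs (pow_ne_zero (n+3) hs)]
    field_simp
    ring

theorem qFib_neg (q x s : K) (hq : q ≠ 0) (hs : s ≠ 0) (n : ℕ) :
    qFib q x s (-(n : ℤ)) =
      (-1 : K) ^ ((n : ℤ) - 1) * q ^ ((n + 1).choose 2) *
        qFib q x (q ^ (-(n : ℤ)) * s) (n : ℤ) / s ^ n := by
  cases n with
  | zero => simp [qFib, qFibPos]
  | succ m =>
    have h1 : (-((m + 1 : ℕ) : ℤ)) = Int.negSucc m := by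
      simp [Int.negSucc_eq]
    have h2 : qFib q x s (Int.negSucc m) = qFibNeg q x s (m + 1) := rfl
    have h3 : ∀ t : K, qFib q x t (((m + 1 : ℕ) : ℤ)) = qFibPos q x t (m + 1) :=
      fun t => rfl
    rw [h1, h2, h3, show (((m + 1 : ℕ) : ℤ)) - 1 = (m : ℤ) by push_cast; ring,
      zpow_natCast, zpow_negSucc]
    exact qFibNeg_eq q x s hq hs m
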